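/- In the IRL1 setting with level-set boundedness, there exist an integer k̄ and a vector s ∈ {−1, 0, +1}^n such that sign(x_i^k) = s_i for all i ∈ {1, …, n} and all k > k̄; i.e., the sign pattern of the iterates is eventually constant. -/

import Mathlib

/-!
The smoothed objective `F(·, εᵏ)` is majorized at `xᵏ` by the IRL1 subproblem: concavity of
`t ↦ (t + ε)ᵖ` linearizes the penalty into the weighted `ℓ¹` term. Together with the descent lemma
for `f` and the `M`-strong convexity of `Qₖ` (used both at `xᵏ` and at the minimizer `xᵏ⁺¹`), each
step decreases `F(xᵏ, εᵏ)` by at least `(M - L_f/2)‖xᵏ⁺¹ - xᵏ‖²`. Level-set boundedness keeps the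
iterates bounded and `F` bounded below, so `‖xᵏ⁺¹ - xᵏ‖ → 0`.

If `xᵏ⁺¹ᵢ ≠ 0`, the optimality condition of the subproblem in coordinate `i` bounds the weight
`λ w(xᵏᵢ, εᵏᵢ)` by `‖∇Qₖ(xᵏ⁺¹)‖`, which is bounded; as `w(t, s) → ∞` when `|t| + s → 0`, this
keeps `|xᵏᵢ| + εᵏᵢ ≥ δ` for a fixed `δ > 0`. Once `εᵏ` and the steps are below `δ/2`, a nonzero
`xᵏ⁺¹ᵢ` has the sign of `xᵏᵢ`: a coordinate that vanishes stays zero, and one that never vanishes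
keeps its sign.
-/

open Filter Topology

/-- The weight function `w(t, s) = p(|t| + s)^(p-1)`. -/
noncomputable def wfun (p t s : ℝ) : ℝ := p * (|t| + s) ^ (p - 1)

/-- The IRL1 setting (Algorithm 2.1 of the paper): fixed data `p ∈ (0,1)`, `λ > 0`,
`μ ∈ (0,1)`, a differentiable `f` with `Lf`-Lipschitz gradient (`Lf ≥ 0`), iterates
`x^k`, positive parameters `ε^k` with `ε^{k+1} ≤ μ ε^k` componentwise, and for each `k`
a differentiable model `Q_k` with `∇Q_k(x^k) = ∇f(x^k)`, `M`-strongly convex with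
`M > Lf/2` (strong convexity meaning `z ↦ Q_k z - (M/2)‖z‖²` is convex), `∇Q_k`
`L`-Lipschitz, such that `x^{k+1}` is a global minimizer of
`G(·; x^k, ε^k) = Q_k(·) + λ Σᵢ w(xᵢ^k, εᵢ^k)|·ᵢ|`. -/
structure IRL1 (n : ℕ) where
  p : ℝ
  lam : ℝ
  mu : ℝ
  Lf : ℝ
  M : ℝ
  L : ℝ
  f : EuclideanSpace ℝ (Fin n) → ℝ
  x : ℕ → EuclideanSpace ℝ (Fin n)
  eps : ℕ → Fin n → ℝ
  Q : ℕ → EuclideanSpace ℝ (Fin n) → ℝ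
  hp0 : 0 < p
  hp1 : p < 1
  hlam : 0 < lam
  hmu0 : 0 < mu
  hmu1 : mu < 1
  hLf : 0 ≤ Lf
  hM : Lf / 2 < M
  hf_diff : Differentiable ℝ f
  hf_lip : ∀ a b, ‖gradient f a - gradient f b‖ ≤ Lf * ‖a - b‖
  heps_pos : ∀ k i, 0 < eps k i
  heps_dec : ∀ k i, eps (k + 1) i ≤ mu * eps k i
  hQ_diff : ∀ k, Differentiable ℝ (Q k)
  hQ_grad : ∀ k, gradient (Q k) (x k) = gradient f (x k)
  hQ_sconv : ∀ k, ConvexOn ℝ Set.univ (fun z => Q k z - M / 2 * ‖z‖ ^ 2)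
  hQ_lip : ∀ k a b, ‖gradient (Q k) a - gradient (Q k) b‖ ≤ L * ‖a - b‖
  hmin : ∀ k, ∀ z : EuclideanSpace ℝ (Fin n),
    Q k (x (k + 1)) + lam * ∑ i, wfun p (x k i) (eps k i) * |x (k + 1) i|
      ≤ Q k z + lam * ∑ i, wfun p (x k i) (eps k i) * |z i|

/-- The smoothed objective `F(x, ε) = f(x) + λ Σᵢ (|xᵢ| + εᵢ)^p`. -/
noncomputable def IRL1.Feps {n : ℕ} (S : IRL1 n)
    (z : EuclideanSpace ℝ (Fin n)) (e : Fin n → ℝ) : ℝ :=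
  S.f z + S.lam * ∑ i, (|z i| + e i) ^ S.p

/-- The objective `F(x) = f(x) + λ Σᵢ |xᵢ|^p`. -/
noncomputable def IRL1.Fobj {n : ℕ} (S : IRL1 n) (z : EuclideanSpace ℝ (Fin n)) : ℝ :=
  S.f z + S.lam * ∑ i, |z i| ^ S.p

/-- The subproblem objective `G(z; x^k, ε^k)`. -/
noncomputable def IRL1.G {n : ℕ} (S : IRL1 n) (k : ℕ)
    (z : EuclideanSpace ℝ (Fin n)) : ℝ :=
  S.Q k z + S.lam * ∑ i, wfun S.p (S.x k i) (S.eps k i) * |z i|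

/-- The level set `{x : F(x) ≤ F(x⁰, ε⁰)}` is bounded. -/
def IRL1.LevelBounded {n : ℕ} (S : IRL1 n) : Prop :=
  Bornology.IsBounded {z : EuclideanSpace ℝ (Fin n) | S.Fobj z ≤ S.Feps (S.x 0) (S.eps 0)}

open Set

section InnerProductSpace

variable {E : Type*} [NormedAddCommGroup E] [InnerProductSpace ℝ E]

lemma ConvexOn.add_fderiv_le {h : E → ℝ} {h' : E →L[ℝ] ℝ} {x : E} (hconv : ConvexOn ℝ univ h)
    (hd : HasFDerivAt h h' x) (y : E) : h x + h' (y - x) ≤ h y := by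
  have hline : HasDerivAt (fun t : ℝ => x + t • (y - x)) (y - x) 0 := by
    simpa using ((hasDerivAt_id (0 : ℝ)).smul_const (y - x)).const_add x
  have hφ : ConvexOn ℝ univ (fun t : ℝ => h (x + t • (y - x))) := by
    simpa [Function.comp_def, AffineMap.lineMap_apply_module', add_comm] using
      hconv.comp_affineMap (AffineMap.lineMap x y)
  have hd₀ : HasFDerivAt h h' (x + (0 : ℝ) • (y - x)) := by simpa using hd
  have hslope := hφ.le_slope_of_hasDerivAt (mem_univ 0) (mem_univ 1) one_pos
    (hd₀.comp_hasDerivAt 0 hline)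
  simp only [slope_def_field, one_smul, zero_smul, add_zero, add_sub_cancel, sub_zero,
    div_one] at hslope
  linarith

lemma StrongConvexOn.add_sq_le_of_forall_le {g : E → ℝ} {m : ℝ} (hg : StrongConvexOn univ m g)
    {x₀ : E} (hmin : ∀ z, g x₀ ≤ g z) (z : E) : g x₀ + m / 2 * ‖z - x₀‖ ^ 2 ≤ g z := by
  have hpos : ∀ t ∈ Ioo (0 : ℝ) 1, g x₀ + (1 - t) * (m / 2 * ‖z - x₀‖ ^ 2) ≤ g z := by
    intro t ht
    have hconv := hg.2 (mem_univ z) (mem_univ x₀) ht.1.le (sub_nonneg.2 ht.2.le) (by ring)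
    have hle := (hmin _).trans hconv
    simp only [smul_eq_mul] at hle
    refine le_of_mul_le_mul_left ?_ ht.1
    linarith
  have hlim : Tendsto (fun t : ℝ => g x₀ + (1 - t) * (m / 2 * ‖z - x₀‖ ^ 2)) (𝓝[>] 0)
      (𝓝 (g x₀ + m / 2 * ‖z - x₀‖ ^ 2)) :=
    tendsto_nhdsWithin_of_tendsto_nhds ((by fun_prop : Continuous _).tendsto' 0 _ (by simp))
  refine le_of_tendsto hlim ?_
  filter_upwards [Ioo_mem_nhdsGT one_pos] with t ht using hpos t ht

variable [CompleteSpace E]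

lemma hasDerivAt_apply_add_smul {g : E → ℝ} {x d : E} {t : ℝ}
    (hg : DifferentiableAt ℝ g (x + t • d)) :
    HasDerivAt (fun s : ℝ => g (x + s • d)) (inner ℝ (gradient g (x + t • d)) d) t := by
  have hline : HasDerivAt (fun s : ℝ => x + s • d) d t := by
    simpa using ((hasDerivAt_id t).smul_const d).const_add x
  simpa only [Function.comp_def, InnerProductSpace.toDual_apply_apply] using
    hg.hasGradientAt.hasFDerivAt.comp_hasDerivAt t hline

lemma le_add_inner_gradient_add_sq {f : E → ℝ} {L : ℝ} (hf : Differentiable ℝ f)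
    (hlip : ∀ a b, ‖gradient f a - gradient f b‖ ≤ L * ‖a - b‖) (x y : E) :
    f y ≤ f x + inner ℝ (gradient f x) (y - x) + L / 2 * ‖y - x‖ ^ 2 := by
  set d := y - x
  set φ : ℝ → ℝ := fun t => f (x + t • d) - t * inner ℝ (gradient f x) d - L / 2 * ‖d‖ ^ 2 * t ^ 2
  have hφ' : ∀ t, HasDerivAt φ
      (inner ℝ (gradient f (x + t • d) - gradient f x) d - L * ‖d‖ ^ 2 * t) t := by
    intro t
    refine (((hasDerivAt_apply_add_smul (hf _)).sub ((hasDerivAt_id t).mul_const _)).sub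
      ((hasDerivAt_pow 2 t).const_mul (L / 2 * ‖d‖ ^ 2))).congr_deriv ?_
    rw [inner_sub_left]
    ring
  have hanti : AntitoneOn φ (Icc 0 1) := by
    refine antitoneOn_of_hasDerivWithinAt_nonpos (convex_Icc 0 1)
      (fun t _ => (hφ' t).continuousAt.continuousWithinAt) (fun t _ => (hφ' t).hasDerivWithinAt)
      fun t ht => ?_
    rw [interior_Icc] at ht
    calc inner ℝ (gradient f (x + t • d) - gradient f x) d - L * ‖d‖ ^ 2 * t
        ≤ ‖gradient f (x + t • d) - gradient f x‖ * ‖d‖ - L * ‖d‖ ^ 2 * t := by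
          gcongr; exact real_inner_le_norm _ _
      _ ≤ L * ‖(x + t • d) - x‖ * ‖d‖ - L * ‖d‖ ^ 2 * t := by
          gcongr; exact hlip _ _
      _ = 0 := by
          rw [add_sub_cancel_left, norm_smul, Real.norm_of_nonneg ht.1.le]; ring
  have h01 := hanti (left_mem_Icc.2 zero_le_one) (right_mem_Icc.2 zero_le_one) zero_le_one
  simp only [φ, d, one_smul, zero_smul, add_zero, add_sub_cancel] at h01
  linarith

lemma add_inner_gradient_add_sq_le {Q : E → ℝ} {m : ℝ} (hQ : Differentiable ℝ Q)
    (hconv : ConvexOn ℝ univ fun z => Q z - m / 2 * ‖z‖ ^ 2) (x y : E) :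
    Q x + inner ℝ (gradient Q x) (y - x) + m / 2 * ‖y - x‖ ^ 2 ≤ Q y := by
  have h := hconv.add_fderiv_le
    ((hQ x).hasGradientAt.hasFDerivAt.sub (((hasFDerivAt_id x).norm_sq).const_mul (m / 2))) y
  have hsq : ‖y‖ ^ 2 = ‖x‖ ^ 2 + 2 * inner ℝ x (y - x) + ‖y - x‖ ^ 2 := by
    rw [← norm_add_sq_real, add_sub_cancel]
  simp only [sub_apply, smul_apply, InnerProductSpace.toDual_apply_apply,
    ContinuousLinearMap.comp_apply, ContinuousLinearMap.id_apply, id, innerSL_apply_apply,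
    smul_eq_mul, nsmul_eq_mul, Nat.cast_ofNat, hsq] at h
  linarith

end InnerProductSpace

lemma Real.rpow_le_rpow_add_mul_sub {p c d : ℝ} (hp₀ : 0 ≤ p) (hp₁ : p ≤ 1) (hc : 0 < c)
    (hd : 0 ≤ d) : d ^ p ≤ c ^ p + p * c ^ (p - 1) * (d - c) := by
  set s := (d - c) / c
  have hs : -1 ≤ s := by rw [le_div_iff₀ hc]; linarith
  have hcs : c * s = d - c := mul_div_cancel₀ _ hc.ne'
  have hd_eq : d = c * (1 + s) := by linarith [mul_add c 1 s]
  have hcp : c ^ p = c ^ (p - 1) * c := by rw [← Real.rpow_add_one hc.ne']; norm_num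
  calc d ^ p = c ^ p * (1 + s) ^ p := by rw [hd_eq, Real.mul_rpow hc.le (by linarith)]
    _ ≤ c ^ p * (1 + p * s) :=
        mul_le_mul_of_nonneg_left (rpow_one_add_le_one_add_mul_self hs hp₀ hp₁) (by positivity)
    _ = c ^ p + p * c ^ (p - 1) * (d - c) := by rw [hcp, ← hcs]; ring

lemma Real.exists_pos_forall_le_of_rpow_le {q : ℝ} (hq : q < 0) (A : ℝ) :
    ∃ δ > 0, ∀ b > 0, b ^ q ≤ A → δ ≤ b := by
  obtain ⟨δ, hδ, hsub⟩ := mem_nhdsGT_iff_exists_Ioo_subset.1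
    ((tendsto_rpow_neg_nhdsGT_zero hq).eventually_gt_atTop A)
  refine ⟨δ, hδ, fun b hb hbA => not_lt.1 fun hbδ => ?_⟩
  exact (hsub ⟨hb, hbδ⟩ : A < b ^ q).not_ge hbA

lemma Real.sign_eq_of_abs_sub_lt {a b : ℝ} (h : |b - a| < |a|) : Real.sign b = Real.sign a := by
  rcases lt_trichotomy a 0 with ha | ha | ha
  · rw [abs_of_neg ha] at h
    rw [Real.sign_of_neg ha, Real.sign_of_neg (by linarith [le_abs_self (b - a)])]
  · simp [ha] at h; linarith [abs_nonneg b]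
  · rw [abs_of_pos ha] at h
    rw [Real.sign_of_pos ha, Real.sign_of_pos (by linarith [neg_abs_le (b - a)])]

lemma tendsto_zero_of_succ_le_mul {u : ℕ → ℝ} {μ : ℝ} (hu : ∀ k, 0 ≤ u k) (hμ₀ : 0 ≤ μ)
    (hμ₁ : μ < 1) (h : ∀ k, u (k + 1) ≤ μ * u k) : Tendsto u atTop (𝓝 0) := by
  refine squeeze_zero hu (fun k => le_geom hμ₀ k fun j _ => h j) ?_
  simpa using (tendsto_pow_atTop_nhds_zero_of_lt_one hμ₀ hμ₁).mul_const (u 0)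

lemma tendsto_zero_of_succ_add_mul_sq_le {a d : ℕ → ℝ} {c : ℝ} (hc : 0 < c)
    (ha : BddBelow (range a)) (h : ∀ k, a (k + 1) + c * d k ^ 2 ≤ a k) :
    Tendsto d atTop (𝓝 0) := by
  have hanti : Antitone a := antitone_nat_of_succ_le fun k => by nlinarith [h k, sq_nonneg (d k)]
  have hgap : Tendsto (fun k => (a k - a (k + 1)) / c) atTop (𝓝 0) := by
    have hlim := tendsto_atTop_ciInf hanti ha
    simpa using (hlim.sub (hlim.comp (tendsto_add_atTop_nat 1))).div_const c
  have hsq : Tendsto (fun k => d k ^ 2) atTop (𝓝 0) :=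
    squeeze_zero (fun k => sq_nonneg _)
      (fun k => by rw [le_div_iff₀ hc]; linarith [h k]) hgap
  rw [tendsto_zero_iff_abs_tendsto_zero]
  simpa [Function.comp_def, Real.sqrt_sq_eq_abs] using hsq.sqrt

lemma exists_eventually_sign_eq {a : ℕ → ℝ}
    (h : ∀ᶠ k in atTop, a (k + 1) ≠ 0 → Real.sign (a (k + 1)) = Real.sign (a k)) :
    ∃ c, ∀ᶠ k in atTop, Real.sign (a k) = c := by
  obtain ⟨K, hK⟩ := eventually_atTop.1 h
  by_cases hzero : ∃ k₀ ≥ K, a k₀ = 0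
  · obtain ⟨k₀, hk₀K, hk₀⟩ := hzero
    have hstay : ∀ k ≥ k₀, a k = 0 := by
      refine Nat.le_induction hk₀ fun k hk ih => by_contra fun hne => ?_
      have := hK k (hk₀K.trans hk) hne
      rw [ih, Real.sign_zero] at this
      exact hne (Real.sign_eq_zero_iff.1 this)
    exact ⟨0, eventually_atTop.2 ⟨k₀, fun k hk => by rw [hstay k hk, Real.sign_zero]⟩⟩
  · push Not at hzero
    refine ⟨Real.sign (a K), eventually_atTop.2 ⟨K, Nat.le_induction rfl fun k hk ih => ?_⟩⟩
    rw [hK k hk (hzero (k + 1) (by omega)), ih]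

section Euclidean

variable {ι : Type*} [Fintype ι]

lemma convexOn_sum_mul_abs {w : ι → ℝ} (hw : ∀ i, 0 ≤ w i) :
    ConvexOn ℝ univ fun z : EuclideanSpace ℝ ι => ∑ i, w i * |z i| := by
  have hterm : ∀ i, ConvexOn ℝ univ fun z : EuclideanSpace ℝ ι => w i * |z i| := fun i =>
    ((convexOn_norm convex_univ).comp_linearMap
      (EuclideanSpace.proj i : EuclideanSpace ℝ ι →L[ℝ] ℝ).toLinearMap).smul (hw i)
  have hsum := Finset.sum_induction (s := Finset.univ)
    (fun i (z : EuclideanSpace ℝ ι) => w i * |z i|) (ConvexOn ℝ univ) (fun _ _ => ConvexOn.add)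
    (convexOn_const 0 convex_univ) fun i _ => hterm i
  rwa [Finset.sum_fn] at hsum

variable [DecidableEq ι]

lemma sum_mul_abs_add_smul_single {w : ι → ℝ} (y : EuclideanSpace ℝ ι) (i : ι) (t : ℝ) :
    ∑ j, w j * |(y + t • EuclideanSpace.single i 1 : EuclideanSpace ℝ ι) j|
      = ∑ j, w j * |y j| + w i * (|y i + t| - |y i|) := by
  rw [← sub_eq_iff_eq_add', ← Finset.sum_sub_distrib, Finset.sum_eq_single i]
  · simp only [PiLp.add_apply, PiLp.smul_apply, PiLp.single_eq_same, smul_eq_mul, mul_one]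
    ring
  · intro j _ hj
    simp [hj]
  · simp

lemma mul_le_norm_gradient_of_forall_le {Q : EuclideanSpace ℝ ι → ℝ} {lam : ℝ} {w : ι → ℝ}
    {y : EuclideanSpace ℝ ι} (hQ : DifferentiableAt ℝ Q y) (hlam : 0 ≤ lam) (hw : ∀ j, 0 ≤ w j)
    (hmin : ∀ z, Q y + lam * ∑ j, w j * |y j| ≤ Q z + lam * ∑ j, w j * |z j|)
    {i : ι} (hi : y i ≠ 0) :
    lam * w i ≤ ‖gradient Q y‖ := by
  set e := EuclideanSpace.single i (1 : ℝ)
  set ψ : ℝ → ℝ := fun t => Q (y + t • e) + lam * (w i * |y i + t|)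
  have hψmin : IsLocalMin ψ 0 := Eventually.of_forall fun t => by
    have := hmin (y + t • e)
    rw [sum_mul_abs_add_smul_single] at this
    simp only [ψ, zero_smul, add_zero]
    linarith
  have hψ' : HasDerivAt ψ (gradient Q y i + lam * (w i * SignType.sign (y i))) 0 := by
    have hQ' : HasDerivAt (fun t : ℝ => Q (y + t • e)) (gradient Q y i) 0 := by
      simpa only [zero_smul, add_zero, e, EuclideanSpace.inner_single_right, one_mul,
        conj_trivial] using
        hasDerivAt_apply_add_smul (x := y) (d := e) (t := 0) (by simpa using hQ)
    have habs : HasDerivAt (fun t : ℝ => |y i + t|) (SignType.sign (y i)) 0 :=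
      HasDerivAt.comp_const_add (y i) 0 (by simpa using hasDerivAt_abs hi)
    exact hQ'.add ((habs.const_mul (w i)).const_mul lam)
  have hzero := hψmin.hasDerivAt_eq_zero hψ'
  have hsign : |(SignType.sign (y i) : ℝ)| = 1 := by
    rcases hi.lt_or_gt with h | h <;> simp [h]
  calc lam * w i = |gradient Q y i| := by
        rw [eq_neg_of_add_eq_zero_left hzero, abs_neg, abs_mul, abs_mul, hsign,
          abs_of_nonneg hlam, abs_of_nonneg (hw i), mul_one]
    _ ≤ ‖gradient Q y‖ := by simpa using PiLp.norm_apply_le (gradient Q y) i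

end Euclidean

namespace IRL1

variable {n : ℕ} (S : IRL1 n)

lemma abs_add_eps_pos (k : ℕ) (i : Fin n) : 0 < |S.x k i| + S.eps k i :=
  add_pos_of_nonneg_of_pos (abs_nonneg _) (S.heps_pos k i)

lemma wfun_pos (k : ℕ) (i : Fin n) : 0 < wfun S.p (S.x k i) (S.eps k i) :=
  mul_pos S.hp0 (Real.rpow_pos_of_pos (S.abs_add_eps_pos k i) _)

lemma convexOn_G_sub (k : ℕ) :
    ConvexOn ℝ univ fun z => S.G k z - S.M / 2 * ‖z‖ ^ 2 := by
  have hpen := (convexOn_sum_mul_abs fun i => (S.wfun_pos k i).le).smul S.hlam.le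
  refine ((S.hQ_sconv k).add hpen).congr fun z _ => ?_
  simp only [G, Pi.add_apply, smul_eq_mul]
  ring

lemma sum_rpow_le_sum_rpow_add (k : ℕ) (z : EuclideanSpace ℝ (Fin n)) :
    ∑ i, (|z i| + S.eps k i) ^ S.p ≤ ∑ i, (|S.x k i| + S.eps k i) ^ S.p
      + ∑ i, wfun S.p (S.x k i) (S.eps k i) * (|z i| - |S.x k i|) := by
  rw [← Finset.sum_add_distrib]
  refine Finset.sum_le_sum fun i _ => ?_
  have h := Real.rpow_le_rpow_add_mul_sub S.hp0.le S.hp1.le (S.abs_add_eps_pos k i)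
    (add_nonneg (abs_nonneg (z i)) (S.heps_pos k i).le)
  simpa only [wfun, add_sub_add_right_eq_sub] using h

lemma sum_rpow_eps_succ_le (k : ℕ) (z : EuclideanSpace ℝ (Fin n)) :
    ∑ i, (|z i| + S.eps (k + 1) i) ^ S.p ≤ ∑ i, (|z i| + S.eps k i) ^ S.p := by
  refine Finset.sum_le_sum fun i _ => Real.rpow_le_rpow ?_ ?_ S.hp0.le
  · exact add_nonneg (abs_nonneg _) (S.heps_pos _ i).le
  · have := S.heps_dec k i
    nlinarith [S.heps_pos k i, S.hmu1]

lemma Feps_succ_add_le (k : ℕ) :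
    S.Feps (S.x (k + 1)) (S.eps (k + 1)) + (S.M - S.Lf / 2) * ‖S.x (k + 1) - S.x k‖ ^ 2
      ≤ S.Feps (S.x k) (S.eps k) := by
  have hdesc := le_add_inner_gradient_add_sq S.hf_diff S.hf_lip (S.x k) (S.x (k + 1))
  have hQ := add_inner_gradient_add_sq_le (S.hQ_diff k) (S.hQ_sconv k) (S.x k) (S.x (k + 1))
  rw [S.hQ_grad k] at hQ
  have hG := (strongConvexOn_iff_convex.2 (S.convexOn_G_sub k)).add_sq_le_of_forall_le
    (S.hmin k) (S.x k)
  rw [norm_sub_rev] at hG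
  have hmaj := mul_le_mul_of_nonneg_left
    ((S.sum_rpow_eps_succ_le k _).trans (S.sum_rpow_le_sum_rpow_add k (S.x (k + 1)))) S.hlam.le
  simp only [G, mul_sub, Finset.sum_sub_distrib] at hG hmaj
  simp only [Feps]
  linarith

lemma Feps_antitone : Antitone fun k => S.Feps (S.x k) (S.eps k) :=
  antitone_nat_of_succ_le fun k => by
    nlinarith [S.Feps_succ_add_le k, S.hM, sq_nonneg ‖S.x (k + 1) - S.x k‖]

lemma f_le_Feps (z : EuclideanSpace ℝ (Fin n)) (k : ℕ) : S.f z ≤ S.Feps z (S.eps k) := by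
  have : 0 ≤ ∑ i, (|z i| + S.eps k i) ^ S.p :=
    Finset.sum_nonneg fun i _ => Real.rpow_nonneg (by linarith [abs_nonneg (z i), S.heps_pos k i]) _
  simp only [Feps]
  nlinarith [S.hlam]

lemma Fobj_le_Feps (z : EuclideanSpace ℝ (Fin n)) (k : ℕ) : S.Fobj z ≤ S.Feps z (S.eps k) := by
  have : ∑ i, |z i| ^ S.p ≤ ∑ i, (|z i| + S.eps k i) ^ S.p :=
    Finset.sum_le_sum fun i _ => Real.rpow_le_rpow (abs_nonneg _)
      (le_add_of_nonneg_right (S.heps_pos k i).le) S.hp0.le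
  simp only [Fobj, Feps]
  nlinarith [S.hlam]

lemma Fobj_x_le (k : ℕ) : S.Fobj (S.x k) ≤ S.Feps (S.x 0) (S.eps 0) :=
  (S.Fobj_le_Feps _ k).trans (S.Feps_antitone (Nat.zero_le k))

variable {S}

lemma LevelBounded.exists_norm_x_le (hbdd : S.LevelBounded) : ∃ R, ∀ k, ‖S.x k‖ ≤ R := by
  obtain ⟨R, hR⟩ := hbdd.subset_closedBall 0
  exact ⟨R, fun k => by simpa using hR (S.Fobj_x_le k)⟩

lemma LevelBounded.bddBelow_Feps (hbdd : S.LevelBounded) :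
    BddBelow (range fun k => S.Feps (S.x k) (S.eps k)) := by
  obtain ⟨m, hm⟩ := hbdd.isCompact_closure.bddBelow_image S.hf_diff.continuous.continuousOn
  refine ⟨m, forall_mem_range.2 fun k => ?_⟩
  exact (hm (mem_image_of_mem _ (subset_closure (S.Fobj_x_le k)))).trans (S.f_le_Feps _ k)

lemma LevelBounded.tendsto_norm_x_succ_sub (hbdd : S.LevelBounded) :
    Tendsto (fun k => ‖S.x (k + 1) - S.x k‖) atTop (𝓝 0) :=
  tendsto_zero_of_succ_add_mul_sq_le (by linarith [S.hM]) hbdd.bddBelow_Feps S.Feps_succ_add_le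

variable (S)

lemma tendsto_eps (i : Fin n) : Tendsto (fun k => S.eps k i) atTop (𝓝 0) :=
  tendsto_zero_of_succ_le_mul (fun k => (S.heps_pos k i).le) S.hmu0.le S.hmu1
    fun k => S.heps_dec k i

lemma lam_mul_wfun_le (k : ℕ) {i : Fin n} (hi : S.x (k + 1) i ≠ 0) :
    S.lam * wfun S.p (S.x k i) (S.eps k i)
      ≤ ‖gradient S.f (S.x k)‖ + S.L * ‖S.x (k + 1) - S.x k‖ := by
  calc S.lam * wfun S.p (S.x k i) (S.eps k i) ≤ ‖gradient (S.Q k) (S.x (k + 1))‖ :=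
        mul_le_norm_gradient_of_forall_le (S.hQ_diff k _) S.hlam.le
          (fun j => (S.wfun_pos k j).le) (S.hmin k) hi
    _ ≤ ‖gradient (S.Q k) (S.x k)‖
          + ‖gradient (S.Q k) (S.x (k + 1)) - gradient (S.Q k) (S.x k)‖ :=
        norm_le_norm_add_norm_sub' _ _
    _ ≤ _ := by
        have hlip := S.hQ_lip k (S.x (k + 1)) (S.x k)
        rw [S.hQ_grad k] at hlip ⊢
        linarith

variable {S}

lemma LevelBounded.exists_lam_mul_wfun_le (hbdd : S.LevelBounded) :
    ∃ C, ∀ k i, S.x (k + 1) i ≠ 0 → S.lam * wfun S.p (S.x k i) (S.eps k i) ≤ C := by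
  obtain ⟨R, hR⟩ := hbdd.exists_norm_x_le
  refine ⟨‖gradient S.f 0‖ + S.Lf * R + |S.L| * (R + R), fun k i hi => ?_⟩
  have hf : ‖gradient S.f (S.x k)‖ ≤ ‖gradient S.f 0‖ + S.Lf * R := by
    have := S.hf_lip (S.x k) 0
    rw [sub_zero] at this
    nlinarith [norm_le_norm_add_norm_sub' (gradient S.f (S.x k)) (gradient S.f 0), hR k, S.hLf]
  have hstep : S.L * ‖S.x (k + 1) - S.x k‖ ≤ |S.L| * (R + R) :=
    mul_le_mul (le_abs_self _) ((norm_sub_le _ _).trans (add_le_add (hR _) (hR k)))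
      (norm_nonneg _) (abs_nonneg _)
  linarith [S.lam_mul_wfun_le k hi]

lemma LevelBounded.exists_le_abs_add_eps (hbdd : S.LevelBounded) :
    ∃ δ > 0, ∀ k i, S.x (k + 1) i ≠ 0 → δ ≤ |S.x k i| + S.eps k i := by
  obtain ⟨C, hC⟩ := hbdd.exists_lam_mul_wfun_le
  have hlp : 0 < S.lam * S.p := mul_pos S.hlam S.hp0
  obtain ⟨δ, hδ, hle⟩ :=
    Real.exists_pos_forall_le_of_rpow_le (sub_neg.2 S.hp1) (C / (S.lam * S.p))
  refine ⟨δ, hδ, fun k i hi => hle _ (S.abs_add_eps_pos k i) ?_⟩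
  rw [le_div_iff₀ hlp]
  have := hC k i hi
  simp only [wfun] at this
  linarith

lemma LevelBounded.eventually_sign_succ_eq (hbdd : S.LevelBounded) :
    ∀ᶠ k in atTop, ∀ i, S.x (k + 1) i ≠ 0 → Real.sign (S.x (k + 1) i) = Real.sign (S.x k i) := by
  obtain ⟨δ, hδ, hle⟩ := hbdd.exists_le_abs_add_eps
  filter_upwards [hbdd.tendsto_norm_x_succ_sub.eventually_lt_const (half_pos hδ),
    eventually_all.2 fun i => (S.tendsto_eps i).eventually_lt_const (half_pos hδ)]
    with k hstep heps i hi
  refine Real.sign_eq_of_abs_sub_lt ?_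
  have hcoord : |S.x (k + 1) i - S.x k i| ≤ ‖S.x (k + 1) - S.x k‖ := by
    simpa using PiLp.norm_apply_le (S.x (k + 1) - S.x k) i
  linarith [hle k i hi, heps i]

end IRL1

/-- In the IRL1 setting with bounded level set, there exist `k̄` and
`s ∈ {-1, 0, +1}^n` such that `sign(x_i^k) = s_i` for all `i` and all `k > k̄`. -/
theorem stmt11 {n : ℕ} (S : IRL1 n) (hbdd : S.LevelBounded) :
    ∃ (kbar : ℕ) (s : Fin n → ℝ),
      (∀ i, s i = -1 ∨ s i = 0 ∨ s i = 1) ∧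
      ∀ k > kbar, ∀ i, Real.sign (S.x k i) = s i := by
  choose s hs using fun i =>
    exists_eventually_sign_eq (a := fun k => S.x k i)
      (hbdd.eventually_sign_succ_eq.mono fun k hk => hk i)
  obtain ⟨K, hK⟩ := eventually_atTop.1 (eventually_all.2 hs)
  refine ⟨K, s, fun i => ?_, fun k hk i => hK k hk.le i⟩
  rw [← hK K le_rfl i]
  exact Real.sign_apply_eq _
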